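/- arXiv:2205.03851 — 2 statements merged into one kernel-verified Lean document; each statement's English description precedes it below -/
import Mathlib

section
/- Let m, n, N, N' be positive integers and let p = (p_{i,j})_{0≤i≤m,0≤j≤n} be positive reals summing to 1. Then the risk difference telescopes over the aggregated sample size: Δ_p(N, N') = Σ_{ν=1}^{N'} Δ_p(N + ν − 1, 1). -/
open Finset

/-- Binomial(N, q) probability mass function at `x`. -/
noncomputable def binPMF (N : ℕ) (q : ℝ) (x : ℕ) : ℝ :=
  (N.choose x : ℝ) * q ^ x * (1 - q) ^ (N - x)

/-- The entropy loss `L(d, p) = ∑ᵢ ∑ⱼ pᵢⱼ log (pᵢⱼ / dᵢⱼ)`. -/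
noncomputable def entropyLoss {m n : ℕ} (d p : Fin (m+1) → Fin (n+1) → ℝ) : ℝ :=
  ∑ i, ∑ j, p i j * Real.log (p i j / d i j)

/-- Support of the Multinomial(N, p) distribution on (1+m)(1+n) cells. -/
def suppX (m n N : ℕ) : Finset (Fin (m+1) → Fin (n+1) → Fin (N+1)) :=
  Finset.univ.filter fun x => ∑ i, ∑ j, (x i j : ℕ) = N

/-- Support of the Multinomial(N', p·) distribution on 1+m cells. -/
def suppY (m N' : ℕ) : Finset (Fin (m+1) → Fin (N'+1)) :=
  Finset.univ.filter fun y => ∑ i, (y i : ℕ) = N'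

/-- Multinomial(N, p) probability of the outcome `x`. -/
noncomputable def wX {m n N : ℕ} (p : Fin (m+1) → Fin (n+1) → ℝ)
    (x : Fin (m+1) → Fin (n+1) → Fin (N+1)) : ℝ :=
  (Nat.multinomial Finset.univ (fun k : Fin (m+1) × Fin (n+1) => (x k.1 k.2 : ℕ)) : ℝ) *
    ∏ i, ∏ j, p i j ^ (x i j : ℕ)

/-- Multinomial(N', (pᵢ.)ᵢ) probability of the outcome `y`, where `pᵢ. = ∑ⱼ pᵢⱼ`. -/
noncomputable def wY {m n N' : ℕ} (p : Fin (m+1) → Fin (n+1) → ℝ)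
    (y : Fin (m+1) → Fin (N'+1)) : ℝ :=
  (Nat.multinomial Finset.univ (fun i => (y i : ℕ)) : ℝ) *
    ∏ i, (∑ j, p i j) ^ (y i : ℕ)

/-- The estimator `p̃` based on the direct observations only. -/
noncomputable def ptilde {m n N : ℕ} (x : Fin (m+1) → Fin (n+1) → Fin (N+1)) :
    Fin (m+1) → Fin (n+1) → ℝ :=
  fun i j => ((x i j : ℝ) + 1/2) / ((N : ℝ) + (1 + m) * (1 + n) / 2)

/-- The estimator `p̂` based on the direct and aggregated observations. -/
noncomputable def phat {m n N N' : ℕ} (x : Fin (m+1) → Fin (n+1) → Fin (N+1))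
    (y : Fin (m+1) → Fin (N'+1)) : Fin (m+1) → Fin (n+1) → ℝ :=
  fun i j =>
    ((((∑ j', (x i j' : ℕ)) : ℕ) : ℝ) + (y i : ℝ) + (1 + n) / 2) /
        ((N : ℝ) + (N' : ℝ) + (1 + m) * (1 + n) / 2) *
      (((x i j : ℝ) + 1/2) / ((((∑ j', (x i j' : ℕ)) : ℕ) : ℝ) + (1 + n) / 2))

/-- The risk difference `Δ_p(N, N') = E_p[L(p̂, p)] − E_p[L(p̃, p)]`, the expectation being
a finite sum over the supports of the independent multinomial observations. -/
noncomputable def riskDiff (m n : ℕ) (p : Fin (m+1) → Fin (n+1) → ℝ) (N N' : ℕ) : ℝ :=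
  ∑ x ∈ suppX m n N, ∑ y ∈ suppY m N',
    wX p x * wY p y * (entropyLoss (phat x y) p - entropyLoss (ptilde x) p)

/-! The cellwise difference of the two losses is `p_{i,j} log (p̃_{i,j} / p̂_{i,j})`, and this ratio
depends on the data only through the smoothed row estimates `(t + (1+n)/2) / (M + (1+m)(1+n)/2)`
of the row counts `t = X_i` (sample size `N`) and `t = X_i + Y_i` (sample size `N + N'`). Since the
row sums of a Multinomial(N, p) sample are Multinomial(N, (p_i)), and adding an independent
Multinomial(N', (p_i)) sample gives a Multinomial(N + N', (p_i)) sample, `Δ_p(N, N') = ψ(N) - ψ(N + N')`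
for a single function `ψ` of the sample size, and the sum telescopes. Both distributional facts
follow by induction from the one-step recursion `E_{K+1}[F] = ∑ᵢ qᵢ E_K[F(· + eᵢ)]`. -/

section Multinomial

variable {ι : Type*} [Fintype ι] [DecidableEq ι]

lemma Nat.succ_mul_multinomial_add_single (f : ι → ℕ) (i : ι) :
    (f i + 1) * Nat.multinomial univ (f + Pi.single i 1) =
      (∑ j, f j + 1) * Nat.multinomial univ f := by
  have hi : i ∉ univ.erase i := notMem_erase i univ
  have hsplit : ∀ g : ι → ℕ, Nat.multinomial univ g =
      (g i + ∑ j ∈ univ.erase i, g j).choose (g i) * Nat.multinomial (univ.erase i) g := by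
    intro g
    rw [← Nat.multinomial_insert hi, insert_erase (mem_univ i)]
  have hoff : ∀ j ∈ univ.erase i, (f + Pi.single i 1 : ι → ℕ) j = f j := fun j hj => by
    simp [ne_of_mem_erase hj]
  rw [hsplit, hsplit f, Nat.multinomial_congr hoff, sum_congr rfl hoff,
    ← add_sum_erase univ f (mem_univ i)]
  simp only [Pi.add_apply, Pi.single_eq_same]
  rw [← mul_assoc, ← mul_assoc, mul_comm (f i + 1), add_right_comm, ← Nat.add_one_mul_choose_eq]

noncomputable def multinomialWeight (q : ι → ℝ) (f : ι → ℕ) : ℝ :=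
  Nat.multinomial univ f * ∏ i, q i ^ f i

lemma succ_mul_multinomialWeight_add_single (q : ι → ℝ) (f : ι → ℕ) (i : ι) :
    (f i + 1 : ℝ) * multinomialWeight q (f + Pi.single i 1) =
      (∑ j, f j + 1 : ℝ) * (q i * multinomialWeight q f) := by
  have hprod : ∏ j, q j ^ (f + Pi.single i 1 : ι → ℕ) j = q i * ∏ j, q j ^ f j := by
    simp only [Pi.add_apply, pow_add, prod_mul_distrib]
    rw [mul_comm]
    congr 1
    rw [Fintype.prod_eq_single i (fun j hj => by simp [hj])]
    simp
  have hmult := congrArg (Nat.cast (R := ℝ)) (Nat.succ_mul_multinomial_add_single f i)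
  push_cast at hmult ⊢
  rw [multinomialWeight, multinomialWeight, hprod]
  linear_combination (q i * ∏ j, q j ^ f j) * hmult

noncomputable def multinomialExpectation (q : ι → ℝ) (K : ℕ) (F : (ι → ℕ) → ℝ) : ℝ :=
  ∑ f ∈ piAntidiag univ K, multinomialWeight q f * F f

lemma sum_piAntidiag_add_single (K : ℕ) (i : ι) (H : (ι → ℕ) → ℝ) :
    ∑ f ∈ piAntidiag univ K, H (f + Pi.single i 1) =
      ∑ g ∈ (piAntidiag univ (K + 1)).filter (fun g => g i ≠ 0), H g := by
  have hcancel : ∀ g : ι → ℕ, g i ≠ 0 → g - Pi.single i 1 + Pi.single i 1 = g := by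
    intro g hg
    ext j
    by_cases hj : j = i
    · subst hj; simp; omega
    · simp [hj]
  refine sum_nbij' (· + Pi.single i 1) (· - Pi.single i 1) ?_ ?_ ?_ ?_ (fun _ _ => rfl)
  · intro f hf
    simp_all [sum_add_distrib]
  · intro g hg
    rw [mem_filter, mem_piAntidiag] at hg
    have := congrArg (∑ j, · j) (hcancel g hg.2)
    simp_all [sum_add_distrib]
  · intro f _
    simp
  · intro g hg
    exact hcancel g (mem_filter.mp hg).2

lemma multinomialExpectation_succ (q : ι → ℝ) (K : ℕ) (F : (ι → ℕ) → ℝ) :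
    multinomialExpectation q (K + 1) F =
      ∑ i, q i * multinomialExpectation q K (fun f => F (f + Pi.single i 1)) := by
  have hK : (K + 1 : ℝ) ≠ 0 := by positivity
  symm
  calc ∑ i, q i * multinomialExpectation q K (fun f => F (f + Pi.single i 1))
      = ∑ i, ∑ f ∈ piAntidiag univ K, ((f + Pi.single i 1 : ι → ℕ) i / (K + 1 : ℝ)) *
          (multinomialWeight q (f + Pi.single i 1) * F (f + Pi.single i 1)) := by
        refine sum_congr rfl fun i _ => ?_
        rw [multinomialExpectation, mul_sum]
        refine sum_congr rfl fun f hf => ?_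
        have hw := succ_mul_multinomialWeight_add_single q f i
        rw [(mem_piAntidiag.mp hf).1] at hw
        field_simp
        simp only [Pi.add_apply, Pi.single_eq_same, Nat.cast_add, Nat.cast_one]
        linear_combination F (f + Pi.single i 1) * hw.symm
    _ = ∑ i, ∑ g ∈ piAntidiag univ (K + 1), (g i / (K + 1 : ℝ)) *
          (multinomialWeight q g * F g) := by
        refine sum_congr rfl fun i _ => ?_
        rw [sum_piAntidiag_add_single K i (fun g => (g i / (K + 1 : ℝ)) *
          (multinomialWeight q g * F g)), sum_filter_of_ne]
        intro g _ hg hgi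
        simp [hgi] at hg
    _ = multinomialExpectation q (K + 1) F := by
        rw [sum_comm, multinomialExpectation]
        refine sum_congr rfl fun g hg => ?_
        rw [← sum_mul, ← sum_div, ← Nat.cast_sum, (mem_piAntidiag.mp hg).1]
        push_cast
        field_simp

lemma multinomialExpectation_zero (q : ι → ℝ) (F : (ι → ℕ) → ℝ) :
    multinomialExpectation q 0 F = F 0 := by
  simp [multinomialExpectation, multinomialWeight, Nat.multinomial]

lemma multinomialExpectation_const (q : ι → ℝ) (hq : ∑ i, q i = 1) (K : ℕ) (c : ℝ) :
    multinomialExpectation q K (fun _ => c) = c := by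
  have := sum_pow_eq_sum_piAntidiag univ q K
  rw [hq, one_pow] at this
  rw [multinomialExpectation, ← sum_mul]
  simp [multinomialWeight, ← this]

lemma multinomialExpectation_sub (q : ι → ℝ) (K : ℕ) (F G : (ι → ℕ) → ℝ) :
    multinomialExpectation q K (fun f => F f - G f) =
      multinomialExpectation q K F - multinomialExpectation q K G := by
  simp only [multinomialExpectation, mul_sub, sum_sub_distrib]

lemma multinomialExpectation_add (q : ι → ℝ) (a b : ℕ) (G : (ι → ℕ) → ℝ) :
    multinomialExpectation q a (fun f => multinomialExpectation q b (fun g => G (f + g))) =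
      multinomialExpectation q (a + b) G := by
  induction a generalizing G with
  | zero => simp [multinomialExpectation_zero]
  | succ a ih =>
    rw [multinomialExpectation_succ, Nat.add_right_comm, multinomialExpectation_succ]
    refine sum_congr rfl fun i _ => ?_
    rw [← ih]
    simp only [add_right_comm _ (Pi.single i 1)]

variable {κ : Type*} [Fintype κ] [DecidableEq κ]

lemma multinomialExpectation_comp_rowSum (Q : ι × κ → ℝ) (K : ℕ) (G : (ι → ℕ) → ℝ) :
    multinomialExpectation Q K (fun g => G (fun i => ∑ j, g (i, j))) =
      multinomialExpectation (fun i => ∑ j, Q (i, j)) K G := by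
  induction K generalizing G with
  | zero => simp [multinomialExpectation_zero, Pi.zero_def]
  | succ K ih =>
    rw [multinomialExpectation_succ, multinomialExpectation_succ, Fintype.sum_prod_type]
    refine sum_congr rfl fun i _ => ?_
    have hrow : ∀ (g : ι × κ → ℕ) (j : κ),
        (fun i' => ∑ j', (g + Pi.single (i, j) 1 : ι × κ → ℕ) (i', j')) =
          (fun i' => ∑ j', g (i', j')) + Pi.single i 1 := by
      intro g j
      ext i'
      by_cases hi : i' = i
      · subst hi; simp [sum_add_distrib, Pi.single_apply]
      · simp [hi]
    simp only [hrow, ih (fun r => G (r + Pi.single i 1)), sum_mul]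

end Multinomial

lemma sum_filter_sum_val_eq_sum_piAntidiag {ι : Type*} [Fintype ι] [DecidableEq ι] (K : ℕ)
    (H : (ι → ℕ) → ℝ) :
    ∑ x ∈ univ.filter (fun x : ι → Fin (K + 1) => ∑ i, (x i : ℕ) = K), H (fun i => x i) =
      ∑ f ∈ piAntidiag univ K, H f := by
  refine sum_nbij (fun x i => (x i : ℕ)) ?_ ?_ ?_ (fun _ _ => rfl)
  · intro x hx
    simpa using hx
  · intro x _ y _ hxy
    funext i
    exact Fin.ext (congrFun hxy i)
  · intro f hf
    have hle : ∀ i, f i ≤ K := fun i =>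
      (mem_piAntidiag.mp hf).1 ▸ single_le_sum (fun j _ => Nat.zero_le (f j)) (mem_univ i)
    refine ⟨fun i => ⟨f i, Nat.lt_succ_of_le (hle i)⟩, ?_, rfl⟩
    simpa using hf

section Estimators

variable {m n : ℕ}

lemma sum_suppY_mul (N' : ℕ) (p : Fin (m+1) → Fin (n+1) → ℝ) (F : (Fin (m+1) → ℕ) → ℝ) :
    ∑ y ∈ suppY m N', wY p y * F (fun i => y i) =
      multinomialExpectation (fun i => ∑ j, p i j) N' F := by
  rw [multinomialExpectation, ← sum_filter_sum_val_eq_sum_piAntidiag]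
  rfl

lemma sum_suppX_mul (N : ℕ) (p : Fin (m+1) → Fin (n+1) → ℝ)
    (F : (Fin (m+1) × Fin (n+1) → ℕ) → ℝ) :
    ∑ x ∈ suppX m n N, wX p x * F (fun k => x k.1 k.2) =
      multinomialExpectation (fun k => p k.1 k.2) N F := by
  rw [multinomialExpectation, ← sum_filter_sum_val_eq_sum_piAntidiag]
  refine sum_equiv (Equiv.curry _ _ _).symm (fun x => ?_) (fun x _ => ?_)
  · simp [suppX, Fintype.sum_prod_type]
  · rw [wX, multinomialWeight, Fintype.prod_prod_type]
    rfl

lemma mul_log_div_sub_mul_log_div (a : ℝ) {b c : ℝ} (hb : 0 < b) (hc : 0 < c) :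
    a * Real.log (a / b) - a * Real.log (a / c) = a * Real.log (c / b) := by
  rcases eq_or_ne a 0 with rfl | ha
  · simp
  rw [Real.log_div ha hb.ne', Real.log_div ha hc.ne', Real.log_div hc.ne' hb.ne']
  ring

noncomputable def rowLogEstimate (m n M t : ℕ) : ℝ :=
  Real.log (((t : ℝ) + (1 + n) / 2) / ((M : ℝ) + (1 + m) * (1 + n) / 2))

lemma entropyLoss_phat_sub_entropyLoss_ptilde {N N' : ℕ} (p : Fin (m+1) → Fin (n+1) → ℝ)
    (x : Fin (m+1) → Fin (n+1) → Fin (N+1)) (y : Fin (m+1) → Fin (N'+1)) :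
    entropyLoss (phat x y) p - entropyLoss (ptilde x) p =
      ∑ i, (∑ j, p i j) * (rowLogEstimate m n N (∑ j, (x i j : ℕ)) -
        rowLogEstimate m n (N + N') (∑ j, (x i j : ℕ) + y i)) := by
  simp only [entropyLoss, ← sum_sub_distrib, sum_mul]
  refine sum_congr rfl fun i _ => sum_congr rfl fun j _ => ?_
  have hquot : ptilde x i j / phat x y i j =
      ((((∑ j', (x i j' : ℕ) : ℕ) : ℝ) + (1 + n) / 2) / (N + (1 + m) * (1 + n) / 2)) /
        ((((∑ j', (x i j' : ℕ) : ℕ) : ℝ) + y i + (1 + n) / 2) /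
          (N + N' + (1 + m) * (1 + n) / 2)) := by
    simp only [ptilde, phat]
    field_simp
  rw [mul_log_div_sub_mul_log_div _ (by unfold phat; positivity) (by unfold ptilde; positivity),
    hquot, Real.log_div (by positivity) (by positivity), rowLogEstimate, rowLogEstimate,
    Nat.cast_add, Nat.cast_add]

noncomputable def expectedRowLogEstimate (m n : ℕ) (p : Fin (m+1) → Fin (n+1) → ℝ) (M : ℕ) : ℝ :=
  multinomialExpectation (fun i => ∑ j, p i j) M
    (fun r => ∑ i, (∑ j, p i j) * rowLogEstimate m n M (r i))

lemma riskDiff_eq_sub (p : Fin (m+1) → Fin (n+1) → ℝ) (hsum : ∑ i, ∑ j, p i j = 1) (N N' : ℕ) :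
    riskDiff m n p N N' =
      expectedRowLogEstimate m n p N - expectedRowLogEstimate m n p (N + N') := by
  let Φ (M : ℕ) (r : Fin (m+1) → ℕ) : ℝ := ∑ i, (∑ j, p i j) * rowLogEstimate m n M (r i)
  have hrisk : riskDiff m n p N N' =
      multinomialExpectation (fun k => p k.1 k.2) N (fun g =>
        multinomialExpectation (fun i => ∑ j, p i j) N' (fun f =>
          Φ N (fun i => ∑ j, g (i, j)) - Φ (N + N') ((fun i => ∑ j, g (i, j)) + f))) := by
    rw [riskDiff, ← sum_suppX_mul]
    refine sum_congr rfl fun x _ => ?_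
    rw [← sum_suppY_mul, mul_sum]
    refine sum_congr rfl fun y _ => ?_
    rw [entropyLoss_phat_sub_entropyLoss_ptilde, mul_assoc]
    simp only [Φ, Pi.add_apply, mul_sub, sum_sub_distrib]
  rw [hrisk]
  simp only [multinomialExpectation_sub, multinomialExpectation_const _ hsum]
  rw [multinomialExpectation_comp_rowSum _ _ (Φ N),
    multinomialExpectation_comp_rowSum _ _ (fun r => multinomialExpectation _ N'
      (fun f => Φ (N + N') (r + f))), multinomialExpectation_add]
  rfl

end Estimators

theorem risk_difference_telescopes_general (m n N N' : ℕ)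
    (p : Fin (m+1) → Fin (n+1) → ℝ)
    (hsum : ∑ i, ∑ j, p i j = 1) :
    riskDiff m n p N N' = ∑ ν ∈ Finset.Icc 1 N', riskDiff m n p (N + ν - 1) 1 := by
  rw [← Ico_add_one_right_eq_Icc, sum_Ico_eq_sum_range, Nat.add_sub_cancel]
  simp only [riskDiff_eq_sub p hsum, add_comm 1, ← add_assoc, add_tsub_cancel_right]
  exact (sum_range_sub' (fun k => expectedRowLogEstimate m n p (N + k)) N').symm

theorem risk_difference_telescopes (m n N N' : ℕ)
    (hm : 1 ≤ m) (hn : 1 ≤ n) (hN : 1 ≤ N) (hN' : 1 ≤ N')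
    (p : Fin (m+1) → Fin (n+1) → ℝ) (hp : ∀ i j, 0 < p i j)
    (hsum : ∑ i, ∑ j, p i j = 1) :
    riskDiff m n p N N' = ∑ ν ∈ Finset.Icc 1 N', riskDiff m n p (N + ν - 1) 1 :=
  risk_difference_telescopes_general m n N N' p hsum
end

section
/- Fix integers m ≥ 1 and n ≥ 3, set ν = (1+n)/2 and p* = 1/(1+m), and for each positive integer N define Δ*(N) = log(1 + 1/(N + (1+m)ν)) − (1/(1+m)) · Σ_{x=0}^N C(N,x) (p*)^x (1 − p*)^{N−x} · (−log(1 − 1/(x + 1 + ν))). Then (N + 1)² · Δ*(N) → (1/2)(1 − (1+m)) = −m/2 as N → ∞. -/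
open Finset Filter

/-!
Write `g t = log (t + 1) - log t`, `p = 1 / (1 + m)` and `μ = N p + ν`. Then the quantity is
`g (μ / p) - p · E g (X + ν)` with `X ~ Binomial(N, p)`, and `μ = E (X + ν)`. Expanding `g` to
second order at `μ` gives `E g (X + ν) = g μ + g'' μ / 2 · Var X + E R`.

Since `g t = 1/t - 1/(2 t²) + O(t⁻³)`, the first part satisfies
`(N + 1)² (g (μ / p) - p g μ) → (1/p - 1) / 2`. Because `Var X = N p (1 - p)` and
`g'' μ ~ 2 / μ³`, the variance term contributes `-(1/p - 1)`. The remainder is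
`O(|X - N p|³ / μ⁴)` near the mean and `O((X - N p)¹⁰ / μ⁸)` away from it. The moment generating
function gives the central moments `E (X - N p)^(2k) = O(N^k)`, hence `(N + 1)² E R = O(N^(-1/2))`.
-/

open Topology

lemma binPMF_eq_eval_bernsteinPolynomial (N : ℕ) (q : ℝ) (x : ℕ) :
    binPMF N q x = (bernsteinPolynomial ℝ N x).eval q := by
  simp [binPMF, bernsteinPolynomial, mul_comm, mul_assoc, mul_left_comm]

lemma binPMF_nonneg {N : ℕ} {q : ℝ} (hq₀ : 0 ≤ q) (hq₁ : q ≤ 1) (x : ℕ) :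
    0 ≤ binPMF N q x := by
  have : 0 ≤ 1 - q := sub_nonneg.2 hq₁
  unfold binPMF
  positivity

lemma sum_binPMF_mul_exp (N : ℕ) (q t : ℝ) :
    ∑ x ∈ range (N + 1), binPMF N q x * Real.exp (t * x) = (q * Real.exp t + (1 - q)) ^ N := by
  rw [add_pow]
  refine sum_congr rfl fun x _ => ?_
  rw [mul_pow, ← Real.exp_nat_mul, binPMF, mul_comm t]
  ring

lemma sum_binPMF (N : ℕ) (q : ℝ) : ∑ x ∈ range (N + 1), binPMF N q x = 1 := by
  simpa using sum_binPMF_mul_exp N q 0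

lemma sum_binPMF_mul_sub_mean (N : ℕ) (q : ℝ) :
    ∑ x ∈ range (N + 1), binPMF N q x * (x - N * q) = 0 := by
  have h := congrArg (Polynomial.eval q) (bernsteinPolynomial.sum_smul ℝ N)
  simp only [Polynomial.eval_finsetSum, nsmul_eq_mul, Polynomial.eval_mul,
    Polynomial.eval_natCast, Polynomial.eval_X] at h
  simp only [mul_sub, sum_sub_distrib, ← sum_mul, sum_binPMF, one_mul, ← h]
  simp [binPMF_eq_eval_bernsteinPolynomial, mul_comm]

lemma sum_binPMF_mul_sub_mean_sq (N : ℕ) (q : ℝ) :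
    ∑ x ∈ range (N + 1), binPMF N q x * (x - N * q) ^ 2 = N * q * (1 - q) := by
  have h := congrArg (Polynomial.eval q) (bernsteinPolynomial.variance ℝ N)
  simp only [Polynomial.eval_finsetSum, Polynomial.eval_mul, Polynomial.eval_pow,
    Polynomial.eval_sub, Polynomial.eval_X, Polynomial.eval_natCast,
    Polynomial.eval_one, nsmul_eq_mul] at h
  rw [← h]
  refine sum_congr rfl fun x _ => ?_
  rw [binPMF_eq_eval_bernsteinPolynomial]
  ring

lemma sum_binPMF_mul_exp_sub_mean_le {N : ℕ} {q t : ℝ} (hq₀ : 0 ≤ q) (hq₁ : q ≤ 1)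
    (ht : |t| ≤ 1) :
    ∑ x ∈ range (N + 1), binPMF N q x * Real.exp (t * (x - N * q)) ≤ Real.exp (N * t ^ 2) := by
  have hmgf : ∑ x ∈ range (N + 1), binPMF N q x * Real.exp (t * (x - N * q)) =
      Real.exp (-(N * q * t)) * (q * Real.exp t + (1 - q)) ^ N := by
    rw [← sum_binPMF_mul_exp, mul_sum]
    refine sum_congr rfl fun x _ => ?_
    rw [show t * (x - N * q) = -(N * q * t) + t * x by ring, Real.exp_add]
    ring
  have hbase : q * Real.exp t + (1 - q) ≤ Real.exp (q * (t + t ^ 2)) := by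
    have := (abs_le.1 (Real.abs_exp_sub_one_sub_id_le ht)).2
    nlinarith [Real.add_one_le_exp (q * (t + t ^ 2))]
  have hpow : (q * Real.exp t + (1 - q)) ^ N ≤ Real.exp (N * (q * (t + t ^ 2))) := by
    rw [Real.exp_nat_mul]
    exact pow_le_pow_left₀ (by nlinarith [Real.exp_pos t]) hbase N
  calc ∑ x ∈ range (N + 1), binPMF N q x * Real.exp (t * (x - N * q))
      ≤ Real.exp (-(N * q * t)) * Real.exp (N * (q * (t + t ^ 2))) := by
        rw [hmgf]; gcongr
    _ = Real.exp (N * q * t ^ 2) := by rw [← Real.exp_add]; ring_nf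
    _ ≤ Real.exp (N * t ^ 2) := by gcongr; nlinarith [sq_nonneg t]

lemma pow_two_mul_le_factorial_mul_exp (y : ℝ) {t : ℝ} (ht : 0 < t) (k : ℕ) :
    y ^ (2 * k) ≤ (2 * k).factorial / t ^ (2 * k) * (Real.exp (t * y) + Real.exp (-(t * y))) := by
  have hexp : (t * |y|) ^ (2 * k) / (2 * k).factorial ≤ Real.exp (t * y) + Real.exp (-(t * y)) := by
    refine (Real.pow_div_factorial_le_exp _ (by positivity) _).trans ?_
    rcases abs_cases y with ⟨hy, _⟩ | ⟨hy, _⟩ <;> simp only [hy, mul_neg] <;>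
      linarith [Real.exp_pos (t * y), Real.exp_pos (-(t * y))]
  rw [mul_pow, pow_mul |y|, sq_abs, ← pow_mul] at hexp
  rw [div_mul_eq_mul_div, le_div_iff₀ (by positivity)]
  rw [div_le_iff₀ (by positivity)] at hexp
  linarith

lemma sum_binPMF_mul_sub_mean_pow_le {N : ℕ} (hN : 1 ≤ N) {q : ℝ} (hq₀ : 0 ≤ q) (hq₁ : q ≤ 1)
    (k : ℕ) :
    ∑ x ∈ range (N + 1), binPMF N q x * (x - N * q) ^ (2 * k) ≤ 6 * (2 * k).factorial * N ^ k := by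
  have hN₀ : (0 : ℝ) < N := by exact_mod_cast hN
  set t := (Real.sqrt N)⁻¹ with ht_def
  have ht₀ : 0 < t := by positivity
  have ht₁ : |t| ≤ 1 := by
    rw [abs_of_pos ht₀]
    exact inv_le_one_of_one_le₀ (Real.one_le_sqrt.2 (by exact_mod_cast hN))
  have hNt : N * t ^ 2 = 1 := by
    rw [ht_def, inv_pow, Real.sq_sqrt hN₀.le, mul_inv_cancel₀ hN₀.ne']
  have htk : (t ^ (2 * k))⁻¹ = N ^ k := by
    rw [ht_def, inv_pow, inv_inv, pow_mul, Real.sq_sqrt hN₀.le]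
  have hplus := sum_binPMF_mul_exp_sub_mean_le (N := N) hq₀ hq₁ ht₁
  have hminus := sum_binPMF_mul_exp_sub_mean_le (N := N) hq₀ hq₁ (t := -t) (by rwa [abs_neg])
  rw [hNt] at hplus
  rw [neg_sq, hNt] at hminus
  have he : Real.exp 1 ≤ 3 := by linarith [Real.exp_one_lt_d9]
  calc ∑ x ∈ range (N + 1), binPMF N q x * (x - N * q) ^ (2 * k)
      ≤ ∑ x ∈ range (N + 1), binPMF N q x * ((2 * k).factorial / t ^ (2 * k) *
          (Real.exp (t * (x - N * q)) + Real.exp (-(t * (x - N * q))))) := by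
        gcongr with x
        · exact binPMF_nonneg hq₀ hq₁ x
        · exact pow_two_mul_le_factorial_mul_exp _ ht₀ k
    _ = (2 * k).factorial * N ^ k *
          (∑ x ∈ range (N + 1), binPMF N q x * Real.exp (t * (x - N * q)) +
            ∑ x ∈ range (N + 1), binPMF N q x * Real.exp (-t * (x - N * q))) := by
        rw [← sum_add_distrib, mul_sum, ← htk]
        refine sum_congr rfl fun x _ => ?_
        ring_nf
    _ ≤ (2 * k).factorial * N ^ k * (3 + 3) := by gcongr <;> linarith
    _ = 6 * (2 * k).factorial * N ^ k := by ring

lemma sum_binPMF_mul_abs_sub_mean_pow_three_le {N : ℕ} (hN : 1 ≤ N) {q : ℝ} (hq₀ : 0 ≤ q)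
    (hq₁ : q ≤ 1) :
    ∑ x ∈ range (N + 1), binPMF N q x * |x - N * q| ^ 3 ≤ 73 * N * Real.sqrt N := by
  have hN₀ : (0 : ℝ) < N := by exact_mod_cast hN
  set s := Real.sqrt N
  have hs₀ : 0 < s := Real.sqrt_pos.2 hN₀
  have hss : s * s = N := Real.mul_self_sqrt hN₀.le
  have hcube : ∀ δ : ℝ, |δ| ^ 3 ≤ (s * δ ^ 2 + δ ^ 4 / s) / 2 := fun δ => by
    rw [le_div_iff₀ two_pos, ← sub_nonneg]
    have : s * δ ^ 2 + δ ^ 4 / s - |δ| ^ 3 * 2 = δ ^ 2 * (s - |δ|) ^ 2 / s := by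
      field_simp
      rw [← sq_abs δ]
      ring
    rw [this]
    positivity
  have hvar : ∑ x ∈ range (N + 1), binPMF N q x * (x - N * q) ^ 2 ≤ N := by
    rw [sum_binPMF_mul_sub_mean_sq]
    have : q * (1 - q) ≤ 1 := by nlinarith
    nlinarith [mul_le_mul_of_nonneg_left this hN₀.le]
  have hfourth : ∑ x ∈ range (N + 1), binPMF N q x * (x - N * q) ^ (2 * 2) ≤ 144 * N ^ 2 := by
    have h := sum_binPMF_mul_sub_mean_pow_le hN hq₀ hq₁ 2
    norm_num [Nat.factorial] at h ⊢
    linarith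
  calc ∑ x ∈ range (N + 1), binPMF N q x * |x - N * q| ^ 3
      ≤ ∑ x ∈ range (N + 1), binPMF N q x * ((s * (x - N * q) ^ 2 + (x - N * q) ^ 4 / s) / 2) := by
        gcongr with x
        · exact binPMF_nonneg hq₀ hq₁ x
        · exact hcube _
    _ = (s * ∑ x ∈ range (N + 1), binPMF N q x * (x - N * q) ^ 2 +
          (∑ x ∈ range (N + 1), binPMF N q x * (x - N * q) ^ (2 * 2)) / s) / 2 := by
        rw [mul_sum, sum_div, ← sum_add_distrib, sum_div]
        refine sum_congr rfl fun x _ => ?_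
        ring
    _ ≤ (s * N + 144 * N ^ 2 / s) / 2 := by gcongr
    _ ≤ 73 * N * s := by
        rw [← hss]
        field_simp
        nlinarith [pow_pos hs₀ 3]

noncomputable def logIncrement (t : ℝ) : ℝ := Real.log (t + 1) - Real.log t

lemma logIncrement_eq_log_one_add_inv {t : ℝ} (ht : 0 < t) :
    logIncrement t = Real.log (1 + 1 / t) := by
  rw [logIncrement, ← Real.log_div (by linarith) ht.ne']
  congr 1
  field_simp

lemma logIncrement_eq_neg_log_one_sub_inv {t : ℝ} (ht : 0 < t) :
    logIncrement t = -Real.log (1 - 1 / (t + 1)) := by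
  rw [show 1 - 1 / (t + 1) = t / (t + 1) by field_simp; ring,
    Real.log_div ht.ne' (by linarith), logIncrement]
  ring

lemma logIncrement_nonneg {t : ℝ} (ht : 0 < t) : 0 ≤ logIncrement t :=
  sub_nonneg.2 (Real.log_le_log ht (by linarith))

lemma logIncrement_le_inv {t : ℝ} (ht : 0 < t) : logIncrement t ≤ 1 / t := by
  rw [logIncrement_eq_log_one_add_inv ht]
  linarith [Real.log_le_sub_one_of_pos (by positivity : 0 < 1 + 1 / t)]

lemma abs_logIncrement_sub_le {t : ℝ} (ht : 2 ≤ t) :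
    |logIncrement t - (1 / t - 1 / (2 * t ^ 2))| ≤ 2 / t ^ 3 := by
  have ht₀ : 0 < t := by linarith
  have hu : |-(1 / t)| < 1 := by
    rw [abs_neg, abs_of_pos (one_div_pos.2 ht₀), div_lt_one ht₀]
    linarith
  have h := Real.abs_log_sub_add_sum_range_le hu 2
  rw [abs_neg, abs_of_pos (one_div_pos.2 ht₀)] at h
  have hinv : 1 / t ≤ 1 / 2 := by rw [div_le_div_iff₀ ht₀ two_pos]; linarith
  have hrhs : (1 / t) ^ (2 + 1) / (1 - 1 / t) ≤ 2 / t ^ 3 :=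
    calc (1 / t) ^ (2 + 1) / (1 - 1 / t) ≤ (1 / t) ^ 3 / (1 / 2) := by gcongr; linarith
      _ = 2 / t ^ 3 := by ring
  have hsum : logIncrement t - (1 / t - 1 / (2 * t ^ 2)) =
      ∑ i ∈ range 2, (-(1 / t)) ^ (i + 1) / (i + 1) + Real.log (1 - -(1 / t)) := by
    simp [sum_range_succ, logIncrement_eq_log_one_add_inv ht₀]
    ring
  rw [hsum]
  exact h.trans hrhs

-- `1 / (μ + 1) - 1 / μ` and `1 / μ ^ 2 - 1 / (μ + 1) ^ 2` are the first two derivatives of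
-- `logIncrement` at `μ`.
noncomputable def logIncrementRemainder (μ δ : ℝ) : ℝ :=
  logIncrement (μ + δ) - logIncrement μ - (1 / (μ + 1) - 1 / μ) * δ -
    (1 / μ ^ 2 - 1 / (μ + 1) ^ 2) / 2 * δ ^ 2

/-- The remainder equals `F (μ + 1) - F μ` for
`F a = log (a + δ) - (log a + δ / a - δ ^ 2 / (2 a ^ 2))`, whose derivative is
`-δ ^ 3 / (a ^ 3 (a + δ))`; the bound follows from the mean value theorem. -/
lemma abs_logIncrementRemainder_le_of_abs_le {μ δ : ℝ} (hμ : 0 < μ) (hδ : |δ| ≤ μ / 2) :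
    |logIncrementRemainder μ δ| ≤ 2 * |δ| ^ 3 / μ ^ 4 := by
  have hδ' : -(μ / 2) ≤ δ := neg_le_of_abs_le hδ
  set F : ℝ → ℝ := fun a => Real.log (a + δ) - Real.log a - δ * a⁻¹ + δ ^ 2 / 2 * (a ^ 2)⁻¹
  have hF : ∀ a ∈ Set.Icc μ (μ + 1), HasDerivAt F (-δ ^ 3 / (a ^ 3 * (a + δ))) a := by
    rintro a ⟨ha, -⟩
    have ha₀ : 0 < a := by linarith
    have haδ : 0 < a + δ := by linarith
    have h := ((((Real.hasDerivAt_log haδ.ne').comp a ((hasDerivAt_id a).add_const δ)).sub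
      (Real.hasDerivAt_log ha₀.ne')).sub ((hasDerivAt_inv ha₀.ne').const_mul δ)).add
      (((hasDerivAt_pow 2 a).inv (by positivity)).const_mul (δ ^ 2 / 2))
    refine h.congr_deriv ?_
    norm_num
    field_simp
    ring
  obtain ⟨ξ, ⟨hξ₁, -⟩, hslope⟩ := exists_hasDerivAt_eq_slope F _ (by linarith : μ < μ + 1)
    (fun a ha => (hF a ha).continuousAt.continuousWithinAt)
    (fun a ha => hF a (Set.Ioo_subset_Icc_self ha))
  have hrem : logIncrementRemainder μ δ = F (μ + 1) - F μ := by
    simp only [logIncrementRemainder, logIncrement, F]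
    rw [show μ + 1 + δ = μ + δ + 1 by ring]
    ring
  rw [add_sub_cancel_left, div_one] at hslope
  have hξ₀ : 0 < ξ := by linarith
  have hξδ : 0 < ξ + δ := by linarith
  rw [hrem, ← hslope, abs_div, abs_neg,
    abs_pow, abs_of_pos (by positivity : 0 < ξ ^ 3 * (ξ + δ)),
    div_le_div_iff₀ (by positivity) (by positivity)]
  have hden : μ ^ 3 * (μ / 2) ≤ ξ ^ 3 * (ξ + δ) := by
    gcongr
    linarith
  calc |δ| ^ 3 * μ ^ 4 = 2 * |δ| ^ 3 * (μ ^ 3 * (μ / 2)) := by ring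
    _ ≤ 2 * |δ| ^ 3 * (ξ ^ 3 * (ξ + δ)) := by gcongr

lemma abs_logIncrementRemainder_le_one_add_sq {μ δ : ℝ} (hμ : 2 ≤ μ) (hμδ : 2 ≤ μ + δ) :
    |logIncrementRemainder μ δ| ≤ 1 + δ ^ 2 := by
  have hμ₀ : 0 < μ := by linarith
  have half_of_two_le {t : ℝ} (ht : 2 ≤ t) : 0 ≤ logIncrement t ∧ logIncrement t ≤ 1 / 2 :=
    ⟨logIncrement_nonneg (by linarith), (logIncrement_le_inv (by linarith)).trans
      (by rw [div_le_div_iff₀ (by linarith) two_pos]; linarith)⟩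
  have h₁ := half_of_two_le hμδ
  have h₂ := half_of_two_le hμ
  have hμ₁ : 1 / (μ + 1) ≤ 1 / μ := one_div_le_one_div_of_le hμ₀ (by linarith)
  have hμ₂ : 1 / (μ + 1) ^ 2 ≤ 1 / μ ^ 2 := one_div_le_one_div_of_le (by positivity) (by nlinarith)
  have hμ_inv : 1 / μ ≤ 1 / 2 := one_div_le_one_div_of_le two_pos hμ
  have hμ_inv_sq : 1 / μ ^ 2 ≤ 1 / 4 := one_div_le_one_div_of_le (by norm_num) (by nlinarith)
  have ha : 0 ≤ 1 / μ - 1 / (μ + 1) ∧ 1 / μ - 1 / (μ + 1) ≤ 1 / 2 := by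
    constructor <;> linarith [one_div_pos.2 (by linarith : 0 < μ + 1)]
  have hb : 0 ≤ 1 / μ ^ 2 - 1 / (μ + 1) ^ 2 ∧ 1 / μ ^ 2 - 1 / (μ + 1) ^ 2 ≤ 1 / 4 := by
    constructor <;> linarith [one_div_pos.2 (by positivity : 0 < (μ + 1) ^ 2)]
  have hδ : |δ| ≤ (1 + δ ^ 2) / 2 := by nlinarith [sq_abs δ, sq_nonneg (|δ| - 1)]
  have haδ : |(1 / μ - 1 / (μ + 1)) * δ| ≤ |δ| / 2 := by
    rw [abs_mul, abs_of_nonneg ha.1]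
    nlinarith [abs_nonneg δ]
  rw [logIncrementRemainder, abs_le]
  constructor <;> nlinarith [abs_le.1 haδ, sq_nonneg δ, mul_nonneg hb.1 (sq_nonneg δ)]

lemma abs_logIncrementRemainder_le {μ δ : ℝ} (hμ : 2 ≤ μ) (hμδ : 2 ≤ μ + δ) :
    |logIncrementRemainder μ δ| ≤ 2 * |δ| ^ 3 / μ ^ 4 + 512 * δ ^ 10 / μ ^ 8 := by
  have hμ₀ : 0 < μ := by linarith
  by_cases hδ : |δ| ≤ μ / 2
  · have : 0 ≤ 512 * δ ^ 10 / μ ^ 8 := by positivity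
    linarith [abs_logIncrementRemainder_le_of_abs_le hμ₀ hδ]
  · -- far from the mean the crude bound suffices, since then `1 ≤ (2 |δ| / μ) ^ 8`
    push Not at hδ
    have hδ₁ : 1 ≤ δ ^ 2 := by nlinarith [sq_abs δ]
    have hδ₈ : (μ / 2) ^ 8 ≤ δ ^ 8 := by
      rw [← Even.pow_abs ⟨4, rfl⟩ δ]
      exact pow_le_pow_left₀ (by positivity) hδ.le 8
    have : 1 + δ ^ 2 ≤ 512 * δ ^ 10 / μ ^ 8 := by
      rw [le_div_iff₀ (by positivity)]
      nlinarith [pow_pos hμ₀ 8]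
    have : 0 ≤ 2 * |δ| ^ 3 / μ ^ 4 := by positivity
    linarith [abs_logIncrementRemainder_le_one_add_sq hμ hμδ]

lemma sum_binPMF_mul_logIncrement (N : ℕ) (q ν : ℝ) :
    ∑ x ∈ range (N + 1), binPMF N q x * logIncrement (x + ν) =
      logIncrement (N * q + ν) +
        (1 / (N * q + ν) ^ 2 - 1 / (N * q + ν + 1) ^ 2) / 2 * (N * q * (1 - q)) +
        ∑ x ∈ range (N + 1), binPMF N q x * logIncrementRemainder (N * q + ν) (x - N * q) := by
  set μ := N * q + ν
  have hpt : ∀ x : ℕ, binPMF N q x * logIncrement (x + ν) =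
      logIncrement μ * binPMF N q x + (1 / (μ + 1) - 1 / μ) * (binPMF N q x * (x - N * q)) +
        (1 / μ ^ 2 - 1 / (μ + 1) ^ 2) / 2 * (binPMF N q x * (x - N * q) ^ 2) +
        binPMF N q x * logIncrementRemainder μ (x - N * q) := fun x => by
    rw [logIncrementRemainder, show μ + (x - N * q) = x + ν by ring]
    ring
  rw [sum_congr rfl fun x _ => hpt x]
  simp only [sum_add_distrib, ← mul_sum, sum_binPMF, sum_binPMF_mul_sub_mean,
    sum_binPMF_mul_sub_mean_sq]
  ring

lemma tendsto_one_div_of_tendsto_natCast_add_one_div {a : ℕ → ℝ} {L : ℝ}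
    (hL : Tendsto (fun N : ℕ => (N + 1) / a N) atTop (𝓝 L)) :
    Tendsto (fun N : ℕ => 1 / a N) atTop (𝓝 0) := by
  have h := hL.mul (tendsto_one_div_add_atTop_nhds_zero_nat (𝕜 := ℝ))
  rw [mul_zero] at h
  refine h.congr fun N => ?_
  field_simp

lemma tendsto_sq_mul_logIncrement_sub_inv {a : ℕ → ℝ} {L : ℝ} (ha : ∀ N, 2 ≤ a N)
    (hL : Tendsto (fun N : ℕ => (N + 1) / a N) atTop (𝓝 L)) :
    Tendsto (fun N : ℕ => ((N : ℝ) + 1) ^ 2 * (logIncrement (a N) - 1 / a N)) atTop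
      (𝓝 (-L ^ 2 / 2)) := by
  have ha₀ : ∀ N, 0 < a N := fun N => by linarith [ha N]
  have herr : Tendsto (fun N : ℕ => ((N : ℝ) + 1) ^ 2 *
      (logIncrement (a N) - (1 / a N - 1 / (2 * a N ^ 2)))) atTop (𝓝 0) := by
    have hbound := ((hL.pow 2).const_mul 2).mul (tendsto_one_div_of_tendsto_natCast_add_one_div hL)
    rw [mul_zero] at hbound
    refine squeeze_zero_norm (fun N => ?_) hbound
    rw [norm_mul, Real.norm_eq_abs, Real.norm_eq_abs, abs_of_nonneg (by positivity)]
    calc ((N : ℝ) + 1) ^ 2 * |logIncrement (a N) - (1 / a N - 1 / (2 * a N ^ 2))|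
        ≤ ((N : ℝ) + 1) ^ 2 * (2 / a N ^ 3) := by gcongr; exact abs_logIncrement_sub_le (ha N)
      _ = 2 * ((N + 1) / a N) ^ 2 * (1 / a N) := by field_simp
  have hmain := ((hL.pow 2).div_const 2).neg.add herr
  rw [add_zero, ← neg_div] at hmain
  refine hmain.congr fun N => ?_
  field_simp [(ha₀ N).ne']
  ring

section

variable {p ν : ℝ}

lemma tendsto_natCast_add_one_div_affine (hp : 0 < p) :
    Tendsto (fun N : ℕ => ((N : ℝ) + 1) / (N * p + ν)) atTop (𝓝 (1 / p)) :=
  (tendsto_add_mul_div_add_mul_atTop_nhds (1 : ℝ) ν 1 hp.ne').congr fun N => by ring_nf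

lemma tendsto_sq_mul_logIncrement_div_sub_mul (hp : 0 < p) (hp₁ : p ≤ 1) (hν : 2 ≤ ν) :
    Tendsto (fun N : ℕ => ((N : ℝ) + 1) ^ 2 *
      (logIncrement ((N * p + ν) / p) - p * logIncrement (N * p + ν))) atTop
      (𝓝 ((1 / p - 1) / 2)) := by
  have hμ : ∀ N : ℕ, 2 ≤ (N : ℝ) * p + ν := fun N => by nlinarith [N.cast_nonneg (α := ℝ)]
  have hμp : ∀ N : ℕ, 2 ≤ ((N : ℝ) * p + ν) / p := fun N =>
    (hμ N).trans (le_div_self (by linarith [hμ N]) hp hp₁)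
  have h₁ := tendsto_sq_mul_logIncrement_sub_inv hμp
    (((tendsto_natCast_add_one_div_affine (ν := ν) hp).const_mul p).congr fun N => by
      field_simp)
  have h₂ := tendsto_sq_mul_logIncrement_sub_inv hμ (tendsto_natCast_add_one_div_affine hp)
  have h := h₁.sub (h₂.const_mul p)
  rw [show -(p * (1 / p)) ^ 2 / 2 - p * (-(1 / p) ^ 2 / 2) = (1 / p - 1) / 2 by
    field_simp; ring] at h
  refine h.congr fun N => ?_
  field_simp
  ring

lemma tendsto_sq_mul_variance_term (hp : 0 < p) (hν : 0 < ν) :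
    Tendsto (fun N : ℕ => ((N : ℝ) + 1) ^ 2 *
      ((1 / (N * p + ν) ^ 2 - 1 / (N * p + ν + 1) ^ 2) / 2 * (N * p * (1 - p)))) atTop
      (𝓝 ((1 - p) / p ^ 2)) := by
  have ratio (a₀ a₁ b₀ : ℝ) := tendsto_add_mul_div_add_mul_atTop_nhds a₀ b₀ a₁ hp.ne'
  have h := ((((ratio 1 1 ν).mul (ratio 0 1 ν)).mul (ratio 1 1 (ν + 1))).mul
    (ratio (2 * ν + 1) (2 * p) (ν + 1))).const_mul (p * (1 - p) / 2)
  rw [show p * (1 - p) / 2 * (1 / p * (1 / p) * (1 / p) * (2 * p / p)) = (1 - p) / p ^ 2 by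
    field_simp] at h
  refine h.congr fun N => ?_
  field_simp
  ring

lemma abs_sum_binPMF_mul_logIncrementRemainder_le (hp : 0 < p) (hp₁ : p ≤ 1) (hν : 2 ≤ ν)
    {N : ℕ} (hN : 1 ≤ N) :
    |∑ x ∈ range (N + 1), binPMF N p x * logIncrementRemainder (N * p + ν) (x - N * p)| ≤
      146 * N * Real.sqrt N / (N * p + ν) ^ 4 +
        512 * (6 * Nat.factorial (2 * 5) * N ^ 5) / (N * p + ν) ^ 8 := by
  have hμ : 2 ≤ (N : ℝ) * p + ν := by nlinarith [N.cast_nonneg (α := ℝ)]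
  have h10 := sum_binPMF_mul_sub_mean_pow_le hN hp.le hp₁ 5
  have h3 := sum_binPMF_mul_abs_sub_mean_pow_three_le hN hp.le hp₁
  calc |∑ x ∈ range (N + 1), binPMF N p x * logIncrementRemainder (N * p + ν) (x - N * p)|
      ≤ ∑ x ∈ range (N + 1), binPMF N p x * |logIncrementRemainder (N * p + ν) (x - N * p)| := by
        refine (abs_sum_le_sum_abs _ _).trans_eq (sum_congr rfl fun x _ => ?_)
        rw [abs_mul, abs_of_nonneg (binPMF_nonneg hp.le hp₁ x)]
    _ ≤ ∑ x ∈ range (N + 1), binPMF N p x * (2 * |x - N * p| ^ 3 / (N * p + ν) ^ 4 +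
          512 * (x - N * p) ^ (2 * 5) / (N * p + ν) ^ 8) := by
        gcongr with x
        · exact binPMF_nonneg hp.le hp₁ x
        · exact abs_logIncrementRemainder_le hμ (by linarith [x.cast_nonneg (α := ℝ)])
    _ = 2 * (∑ x ∈ range (N + 1), binPMF N p x * |x - N * p| ^ 3) / (N * p + ν) ^ 4 +
          512 * (∑ x ∈ range (N + 1), binPMF N p x * (x - N * p) ^ (2 * 5)) / (N * p + ν) ^ 8 := by
        simp only [mul_sum, sum_div, ← sum_add_distrib]
        refine sum_congr rfl fun x _ => ?_
        ring
    _ ≤ 146 * N * Real.sqrt N / (N * p + ν) ^ 4 +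
          512 * (6 * Nat.factorial (2 * 5) * N ^ 5) / (N * p + ν) ^ 8 := by
        gcongr ?_ / _ + 512 * ?_ / _
        linarith

lemma tendsto_sq_mul_sum_binPMF_mul_logIncrementRemainder (hp : 0 < p) (hp₁ : p ≤ 1)
    (hν : 2 ≤ ν) :
    Tendsto (fun N : ℕ => ((N : ℝ) + 1) ^ 2 *
      ∑ x ∈ range (N + 1), binPMF N p x * logIncrementRemainder (N * p + ν) (x - N * p))
      atTop (𝓝 0) := by
  have hK := (tendsto_inv_atTop_zero.comp
    (Real.tendsto_sqrt_atTop.comp tendsto_natCast_atTop_atTop)).const_mul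
      (4 * (146 / p ^ 4 + 512 * (6 * Nat.factorial (2 * 5)) / p ^ 8))
  rw [mul_zero] at hK
  refine squeeze_zero_norm' ?_ hK
  filter_upwards [eventually_ge_atTop 1] with N hN
  have hN₁ : (1 : ℝ) ≤ N := by exact_mod_cast hN
  set s := Real.sqrt N
  have hs₁ : 1 ≤ s := Real.one_le_sqrt.2 hN₁
  have hss : (N : ℝ) = s ^ 2 := (Real.sq_sqrt (by linarith)).symm
  rw [norm_mul, Real.norm_eq_abs, Real.norm_eq_abs, abs_of_nonneg (by positivity)]
  calc ((N : ℝ) + 1) ^ 2 *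
        |∑ x ∈ range (N + 1), binPMF N p x * logIncrementRemainder (N * p + ν) (x - N * p)|
      ≤ ((N : ℝ) + 1) ^ 2 * (146 * N * s / (N * p + ν) ^ 4 +
          512 * (6 * Nat.factorial (2 * 5) * N ^ 5) / (N * p + ν) ^ 8) := by
        gcongr
        exact abs_sum_binPMF_mul_logIncrementRemainder_le hp hp₁ hν hN
    _ ≤ (2 * s ^ 2) ^ 2 * (146 * s ^ 2 * s / (p * s ^ 2) ^ 4 +
          512 * (6 * Nat.factorial (2 * 5) * (s ^ 2) ^ 5) / (p * s ^ 2) ^ 8) := by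
        rw [hss]
        gcongr <;> nlinarith
    _ = 4 * (146 / p ^ 4 + 512 * (6 * Nat.factorial (2 * 5)) / (p ^ 8 * s)) * s⁻¹ := by
        field_simp
        ring
    _ ≤ 4 * (146 / p ^ 4 + 512 * (6 * Nat.factorial (2 * 5)) / p ^ 8) * s⁻¹ := by
        gcongr
        exact le_mul_of_one_le_right (by positivity) hs₁

theorem tendsto_sq_mul_logIncrement_sub_sum_binPMF (hp : 0 < p) (hp₁ : p ≤ 1)
    (hν : 2 ≤ ν) :
    Tendsto (fun N : ℕ => ((N : ℝ) + 1) ^ 2 * (logIncrement ((N * p + ν) / p) -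
      p * ∑ x ∈ range (N + 1), binPMF N p x * logIncrement (x + ν))) atTop
      (𝓝 (-(1 / p - 1) / 2)) := by
  have h := (tendsto_sq_mul_logIncrement_div_sub_mul hp hp₁ hν).sub
    (((tendsto_sq_mul_variance_term hp (by linarith)).add
      (tendsto_sq_mul_sum_binPMF_mul_logIncrementRemainder hp hp₁ hν)).const_mul p)
  rw [show (1 / p - 1) / 2 - p * ((1 - p) / p ^ 2 + 0) = -(1 / p - 1) / 2 by
    field_simp; ring] at h
  refine h.congr fun N => ?_
  rw [sum_binPMF_mul_logIncrement]
  ring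

end

theorem risk_difference_asymptotics_in_N_general (m n : ℕ) (hn : 3 ≤ n) :
    Tendsto
      (fun N : ℕ => ((N : ℝ) + 1) ^ 2 *
        (Real.log (1 + 1 / ((N : ℝ) + (1 + m) * ((1 + n) / 2))) -
          1 / (1 + (m : ℝ)) *
            ∑ x ∈ Finset.range (N+1),
              binPMF N (1 / (1 + (m : ℝ))) x *
                (- Real.log (1 - 1 / ((x : ℝ) + 1 + (1 + n) / 2)))))
      atTop (nhds (-(m : ℝ) / 2)) := by
  have hν : 2 ≤ (1 + (n : ℝ)) / 2 := by
    have : (3 : ℝ) ≤ n := by exact_mod_cast hn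
    linarith
  have h := tendsto_sq_mul_logIncrement_sub_sum_binPMF (p := 1 / (1 + (m : ℝ))) (by positivity)
    (div_le_one_of_le₀ (by linarith [m.cast_nonneg (α := ℝ)]) (by positivity)) hν
  rw [show -(1 / (1 / (1 + (m : ℝ))) - 1) / 2 = -(m : ℝ) / 2 by simp] at h
  refine h.congr fun N => ?_
  rw [logIncrement_eq_log_one_add_inv (by positivity)]
  congr 4
  · field_simp
  · funext x
    rw [logIncrement_eq_neg_log_one_sub_inv (by positivity), add_right_comm]

theorem risk_difference_asymptotics_in_N (m n : ℕ) (hm : 1 ≤ m) (hn : 3 ≤ n) :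
    Tendsto
      (fun N : ℕ => ((N : ℝ) + 1) ^ 2 *
        (Real.log (1 + 1 / ((N : ℝ) + (1 + m) * ((1 + n) / 2))) -
          1 / (1 + (m : ℝ)) *
            ∑ x ∈ Finset.range (N+1),
              binPMF N (1 / (1 + (m : ℝ))) x *
                (- Real.log (1 - 1 / ((x : ℝ) + 1 + (1 + n) / 2)))))
      atTop (nhds (-(m : ℝ) / 2)) :=
  risk_difference_asymptotics_in_N_general m n hn
end
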